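/- Let H be a Hopf algebra over a field k with antipode S and A a right coideal subalgebra of H. For any left H-module U, left A-module V, and right A-module W, there is a natural isomorphism of vector spaces (U ⊗ W) ⊗_A V ≅ W ⊗_A (V ⊗ U), where A acts on V ⊗ U by a·(v ⊗ u) = Σ a₍₀₎v ⊗ a₍₁₎u and on U ⊗ W by (u ⊗ w)·a = Σ S(a₍₁₎)u ⊗ wa₍₀₎. -/
import Mathlib


open TensorProduct LinearMap Coalgebra HopfAlgebra

set_option maxHeartbeats 1000000
set_option synthInstance.maxHeartbeats 200000

variable (k : Type*) [Field k]

/-- The action `H ⊗ M → M` of an algebra `H` on a module `M`, as a linear map. -/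
noncomputable def actionMap (H M : Type*) [Ring H] [Algebra k H]
    [AddCommGroup M] [Module k M] [Module H M] [IsScalarTower k H M] [SMulCommClass k H M] :
    H ⊗[k] M →ₗ[k] M :=
  TensorProduct.lift (Algebra.lsmul k k M).toLinearMap

section TBIAux

variable {k} {H : Type*} [Ring H] [HopfAlgebra k H]
  (A : Subalgebra k H) (δ : ↥A →ₗ[k] ↥A ⊗[k] H)

@[simp] lemma actionMap_tmul (H M : Type*) [Ring H] [Algebra k H]
    [AddCommGroup M] [Module k M] [Module H M] [IsScalarTower k H M] [SMulCommClass k H M]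
    (h : H) (m : M) : actionMap k H M (h ⊗ₜ m) = h • m := rfl

/-- `b ⊗ h ↦ Σ b₍₀₎ ⊗ g(b₍₁₎ ⊗ h)` where `δ b = Σ b₍₀₎ ⊗ b₍₁₎`. -/
noncomputable def tbiChi (g : H ⊗[k] H →ₗ[k] H) : ↥A ⊗[k] H →ₗ[k] ↥A ⊗[k] H :=
  LinearMap.lTensor ↥A g ∘ₗ (TensorProduct.assoc k ↥A H H).toLinearMap ∘ₗ
    LinearMap.rTensor H δ

lemma tbiChi_tmul (g : H ⊗[k] H →ₗ[k] H) (b : ↥A) (h : H) :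
    tbiChi A δ g (b ⊗ₜ h) =
      LinearMap.lTensor ↥A g ((TensorProduct.assoc k ↥A H H) ((δ b) ⊗ₜ h)) := by
  simp [tbiChi]

lemma tbiPsi_comul (g : H ⊗[k] H →ₗ[k] H)
    (hg : g ∘ₗ Coalgebra.comul = Algebra.linearMap k H ∘ₗ Coalgebra.counit) (x : H) :
    LinearMap.lTensor H g ((TensorProduct.assoc k H H H)
      (LinearMap.rTensor H (Coalgebra.comul (R := k)) (Coalgebra.comul (R := k) x)))
      = x ⊗ₜ (1 : H) := by
  rw [Coalgebra.coassoc_apply, ← LinearMap.lTensor_comp_apply, hg,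
    LinearMap.lTensor_comp_apply, Coalgebra.lTensor_counit_comul]
  simp [Algebra.linearMap_apply]

lemma tbi_rTensor_val_chi
    (hδ : ∀ a : ↥A, (TensorProduct.map A.val.toLinearMap LinearMap.id) (δ a) =
      Coalgebra.comul (R := k) (a : H))
    (g : H ⊗[k] H →ₗ[k] H) (t : ↥A ⊗[k] H) :
    LinearMap.rTensor H A.val.toLinearMap (tbiChi A δ g t) =
      LinearMap.lTensor H g ((TensorProduct.assoc k H H H)
        (LinearMap.rTensor H (Coalgebra.comul (R := k))
          (LinearMap.rTensor H A.val.toLinearMap t))) := by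
  induction t using TensorProduct.induction_on with
  | zero => simp only [map_zero]
  | tmul b h =>
      rw [tbiChi_tmul, rTensor_tmul, rTensor_tmul]
      simp only [AlgHom.toLinearMap_apply, Subalgebra.coe_val]
      rw [← hδ b]
      have : (TensorProduct.map A.val.toLinearMap (LinearMap.id : H →ₗ[k] H)) (δ b)
          = LinearMap.rTensor H A.val.toLinearMap (δ b) := rfl
      rw [this]
      generalize (δ b) = s
      induction s using TensorProduct.induction_on with
      | zero => simp only [zero_tmul, LinearEquiv.map_zero, LinearMap.map_zero]
      | tmul b' h' =>
          simp only [TensorProduct.assoc_tmul, LinearMap.lTensor_tmul,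
            LinearMap.rTensor_tmul, TensorProduct.map_tmul, LinearMap.id_coe, id_eq,
            AlgHom.toLinearMap_apply, Subalgebra.coe_val]
      | add s₁ s₂ ih₁ ih₂ =>
          simp only [add_tmul, map_add, ih₁, ih₂]
  | add t₁ t₂ ih₁ ih₂ => simp only [map_add, ih₁, ih₂]

lemma tbiChi_delta
    (hδ : ∀ a : ↥A, (TensorProduct.map A.val.toLinearMap LinearMap.id) (δ a) =
      Coalgebra.comul (R := k) (a : H))
    (g : H ⊗[k] H →ₗ[k] H)
    (hg : g ∘ₗ Coalgebra.comul = Algebra.linearMap k H ∘ₗ Coalgebra.counit) (a : ↥A) :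
    tbiChi A δ g (δ a) = a ⊗ₜ (1 : H) := by
  have hinj : Function.Injective (LinearMap.rTensor H A.val.toLinearMap) :=
    Module.Flat.rTensor_preserves_injective_linearMap A.val.toLinearMap Subtype.val_injective
  apply hinj
  rw [tbi_rTensor_val_chi A δ hδ g (δ a)]
  have hδ' : LinearMap.rTensor H A.val.toLinearMap (δ a) = Coalgebra.comul (R := k) (a : H) :=
    hδ a
  rw [hδ', tbiPsi_comul g hg]
  simp [rTensor_tmul]

end TBIAux

section Maps

variable {k} {H U V W : Type*} [Ring H] [HopfAlgebra k H] (A : Subalgebra k H)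
  [AddCommGroup U] [Module k U] [Module H U] [IsScalarTower k H U] [SMulCommClass k H U]
  [AddCommGroup V] [Module k V] [Module ↥A V] [IsScalarTower k ↥A V] [SMulCommClass k ↥A V]
  [AddCommGroup W] [Module k W] [Module (↥A)ᵐᵒᵖ W] [IsScalarTower k (↥A)ᵐᵒᵖ W]
  [SMulCommClass k (↥A)ᵐᵒᵖ W]

/-- body of the `V ⊗ U` action. -/
noncomputable def tbiBodyVU : (↥A ⊗[k] H) ⊗[k] (V ⊗[k] U) →ₗ[k] V ⊗[k] U :=
  TensorProduct.map (actionMap k ↥A V) (actionMap k H U) ∘ₗ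
    (TensorProduct.tensorTensorTensorComm k ↥A H V U).toLinearMap

/-- body of the `U ⊗ W` action. -/
noncomputable def tbiBodyUW : (↥A ⊗[k] H) ⊗[k] (U ⊗[k] W) →ₗ[k] U ⊗[k] W :=
  TensorProduct.map
      (actionMap k H U ∘ₗ LinearMap.rTensor U (antipode (R := k)))
      (actionMap k (↥A)ᵐᵒᵖ W ∘ₗ
        LinearMap.rTensor W (MulOpposite.opLinearEquiv k).toLinearMap) ∘ₗ
    (TensorProduct.tensorTensorTensorComm k H ↥A U W).toLinearMap ∘ₗ
      LinearMap.rTensor (U ⊗[k] W) ((TensorProduct.comm k ↥A H).toLinearMap)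

@[simp] lemma tbiBodyVU_tmul (b : ↥A) (h : H) (v : V) (u : U) :
    tbiBodyVU A ((b ⊗ₜ h) ⊗ₜ (v ⊗ₜ u)) = (b • v) ⊗ₜ (h • u) := by
  simp [tbiBodyVU]

@[simp] lemma tbiBodyUW_tmul (b : ↥A) (h : H) (u : U) (w : W) :
    tbiBodyUW A ((b ⊗ₜ h) ⊗ₜ (u ⊗ₜ w)) =
      ((antipode (R := k) h) • u) ⊗ₜ ((MulOpposite.op b) • w) := by
  simp [tbiBodyUW]

/-- `b ⊗ h ↦ (h • u) ⊗ (op b • w)`. -/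
noncomputable def tbiXi (u : U) (w : W) : ↥A ⊗[k] H →ₗ[k] U ⊗[k] W :=
  TensorProduct.map
      (actionMap k H U ∘ₗ (TensorProduct.mk k H U).flip u)
      (actionMap k (↥A)ᵐᵒᵖ W ∘ₗ (TensorProduct.mk k (↥A)ᵐᵒᵖ W).flip w ∘ₗ
        (MulOpposite.opLinearEquiv k).toLinearMap) ∘ₗ
    (TensorProduct.comm k ↥A H).toLinearMap

@[simp] lemma tbiXi_tmul (u : U) (w : W) (b : ↥A) (h : H) :
    tbiXi A u w (b ⊗ₜ h) = (h • u) ⊗ₜ ((MulOpposite.op b) • w) := by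
  simp [tbiXi]

/-- the underlying linear equivalence `(U ⊗ W) ⊗ V ≃ W ⊗ (V ⊗ U)`. -/
noncomputable def tbiPhi : (U ⊗[k] W) ⊗[k] V ≃ₗ[k] W ⊗[k] (V ⊗[k] U) :=
  TensorProduct.comm k (U ⊗[k] W) V ≪≫ₗ (TensorProduct.assoc k V U W).symm ≪≫ₗ
    TensorProduct.comm k (V ⊗[k] U) W

@[simp] lemma tbiPhi_tmul (u : U) (w : W) (v : V) :
    tbiPhi (k := k) ((u ⊗ₜ w) ⊗ₜ v) = w ⊗ₜ (v ⊗ₜ u) := by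
  simp [tbiPhi]

@[simp] lemma tbiPhi_symm_tmul (u : U) (w : W) (v : V) :
    (tbiPhi (k := k)).symm (w ⊗ₜ (v ⊗ₜ u)) = (u ⊗ₜ w) ⊗ₜ v := by
  rw [LinearEquiv.symm_apply_eq, tbiPhi_tmul]

end Maps


section Claims

variable {k} {H U V W : Type*} [Ring H] [HopfAlgebra k H] (A : Subalgebra k H)
  (δ : ↥A →ₗ[k] ↥A ⊗[k] H)
  [AddCommGroup U] [Module k U] [Module H U] [IsScalarTower k H U] [SMulCommClass k H U]
  [AddCommGroup V] [Module k V] [Module ↥A V] [IsScalarTower k ↥A V] [SMulCommClass k ↥A V]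
  [AddCommGroup W] [Module k W] [Module (↥A)ᵐᵒᵖ W] [IsScalarTower k (↥A)ᵐᵒᵖ W]
  [SMulCommClass k (↥A)ᵐᵒᵖ W]

lemma tbi_claim1 (R2 : Submodule k (W ⊗[k] (V ⊗[k] U)))
    (hR : ∀ (w : W) (y : V ⊗[k] U) (b : ↥A),
      (MulOpposite.op b • w) ⊗ₜ[k] y - w ⊗ₜ[k] (tbiBodyVU A ((δ b) ⊗ₜ y)) ∈ R2)
    (t : ↥A ⊗[k] H) (u : U) (w : W) (v : V) :
    tbiPhi (k := k) ((tbiBodyUW A (t ⊗ₜ (u ⊗ₜ w))) ⊗ₜ v)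
      - w ⊗ₜ (tbiBodyVU A
        ((tbiChi A δ (LinearMap.mul' k H ∘ₗ LinearMap.lTensor H (antipode (R := k))) t)
          ⊗ₜ (v ⊗ₜ u))) ∈ R2 := by
  induction t using TensorProduct.induction_on with
  | zero =>
      simp only [LinearMap.map_zero, zero_tmul, tmul_zero, LinearEquiv.map_zero, sub_zero,
        sub_self]
      exact Submodule.zero_mem _
  | tmul b h =>
      rw [tbiChi_tmul]
      have inner : ∀ s : ↥A ⊗[k] H,
          tbiBodyVU A ((LinearMap.lTensor ↥A
              (LinearMap.mul' k H ∘ₗ LinearMap.lTensor H (antipode (R := k)))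
              ((TensorProduct.assoc k ↥A H H) (s ⊗ₜ h))) ⊗ₜ (v ⊗ₜ u))
            = tbiBodyVU A (s ⊗ₜ (v ⊗ₜ ((antipode (R := k) h) • u))) := by
        intro s
        induction s using TensorProduct.induction_on with
        | zero => simp only [zero_tmul, LinearEquiv.map_zero, LinearMap.map_zero]
        | tmul b' h' =>
            simp only [TensorProduct.assoc_tmul, LinearMap.lTensor_tmul,
              LinearMap.coe_comp, Function.comp_apply, LinearMap.mul'_apply,
              tbiBodyVU_tmul, mul_smul]
        | add s₁ s₂ ih₁ ih₂ =>
            simp only [add_tmul, LinearMap.map_add, LinearEquiv.map_add, ih₁, ih₂]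
      rw [inner (δ b), tbiBodyUW_tmul, tbiPhi_tmul]
      exact hR w (v ⊗ₜ ((antipode (R := k) h) • u)) b
  | add t₁ t₂ ih₁ ih₂ =>
      have hmem := Submodule.add_mem _ ih₁ ih₂
      rw [sub_add_sub_comm] at hmem
      simpa only [LinearMap.map_add, add_tmul, tmul_add, LinearEquiv.map_add] using hmem

lemma tbi_claim2 (R1 : Submodule k ((U ⊗[k] W) ⊗[k] V))
    (hR : ∀ (x : U ⊗[k] W) (v : V) (b : ↥A),
      (tbiBodyUW A ((δ b) ⊗ₜ x)) ⊗ₜ[k] v - x ⊗ₜ[k] (b • v) ∈ R1)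
    (t : ↥A ⊗[k] H) (u : U) (w : W) (v : V) :
    (tbiPhi (k := k)).symm (w ⊗ₜ (tbiBodyVU A (t ⊗ₜ (v ⊗ₜ u))))
      - (tbiXi A u w
          (tbiChi A δ (LinearMap.mul' k H ∘ₗ LinearMap.rTensor H (antipode (R := k))) t))
        ⊗ₜ v ∈ R1 := by
  induction t using TensorProduct.induction_on with
  | zero =>
      simp only [LinearMap.map_zero, zero_tmul, tmul_zero, LinearEquiv.map_zero, sub_zero,
        sub_self]
      exact Submodule.zero_mem _
  | tmul b h =>
      rw [tbiChi_tmul]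
      have inner : ∀ s : ↥A ⊗[k] H,
          tbiXi A u w (LinearMap.lTensor ↥A
              (LinearMap.mul' k H ∘ₗ LinearMap.rTensor H (antipode (R := k)))
              ((TensorProduct.assoc k ↥A H H) (s ⊗ₜ h)))
            = tbiBodyUW A (s ⊗ₜ ((h • u) ⊗ₜ w)) := by
        intro s
        induction s using TensorProduct.induction_on with
        | zero => simp only [zero_tmul, LinearEquiv.map_zero, LinearMap.map_zero]
        | tmul b' h' =>
            simp only [TensorProduct.assoc_tmul, LinearMap.lTensor_tmul,
              LinearMap.rTensor_tmul, LinearMap.coe_comp, Function.comp_apply,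
              LinearMap.mul'_apply, tbiXi_tmul, tbiBodyUW_tmul, mul_smul]
        | add s₁ s₂ ih₁ ih₂ =>
            simp only [add_tmul, LinearMap.map_add, LinearEquiv.map_add, ih₁, ih₂]
      rw [inner (δ b), tbiBodyVU_tmul, tbiPhi_symm_tmul, ← neg_sub]
      exact Submodule.neg_mem _ (hR ((h • u) ⊗ₜ w) v b)
  | add t₁ t₂ ih₁ ih₂ =>
      have hmem := Submodule.add_mem _ ih₁ ih₂
      rw [sub_add_sub_comm] at hmem
      simpa only [LinearMap.map_add, add_tmul, tmul_add, LinearEquiv.map_add] using hmem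

lemma tbi_main1
    (hδ : ∀ a : ↥A, (TensorProduct.map A.val.toLinearMap LinearMap.id) (δ a) =
      Coalgebra.comul (R := k) (a : H))
    (R2 : Submodule k (W ⊗[k] (V ⊗[k] U)))
    (hR : ∀ (w : W) (y : V ⊗[k] U) (b : ↥A),
      (MulOpposite.op b • w) ⊗ₜ[k] y - w ⊗ₜ[k] (tbiBodyVU A ((δ b) ⊗ₜ y)) ∈ R2)
    (a : ↥A) (x : U ⊗[k] W) (v : V) :
    tbiPhi (k := k) ((tbiBodyUW A ((δ a) ⊗ₜ x)) ⊗ₜ v)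
      - tbiPhi (k := k) (x ⊗ₜ (a • v)) ∈ R2 := by
  have hg1 : (LinearMap.mul' k H ∘ₗ LinearMap.lTensor H (antipode (R := k))) ∘ₗ
      Coalgebra.comul = Algebra.linearMap k H ∘ₗ Coalgebra.counit := by
    rw [LinearMap.comp_assoc]; exact mul_antipode_lTensor_comul
  induction x using TensorProduct.induction_on with
  | zero =>
      simp only [tmul_zero, LinearMap.map_zero, zero_tmul, LinearEquiv.map_zero,
        sub_self, sub_zero]
      exact Submodule.zero_mem _
  | tmul u w =>
      have h1 := tbi_claim1 A δ R2 hR (δ a) u w v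
      rw [tbiChi_delta A δ hδ _ hg1 a] at h1
      simpa only [tbiBodyVU_tmul, one_smul, tbiPhi_tmul] using h1
  | add x₁ x₂ ih₁ ih₂ =>
      have hmem := Submodule.add_mem _ ih₁ ih₂
      rw [sub_add_sub_comm] at hmem
      simpa only [tmul_add, LinearMap.map_add, add_tmul, LinearEquiv.map_add] using hmem

lemma tbi_main2
    (hδ : ∀ a : ↥A, (TensorProduct.map A.val.toLinearMap LinearMap.id) (δ a) =
      Coalgebra.comul (R := k) (a : H))
    (R1 : Submodule k ((U ⊗[k] W) ⊗[k] V))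
    (hR : ∀ (x : U ⊗[k] W) (v : V) (b : ↥A),
      (tbiBodyUW A ((δ b) ⊗ₜ x)) ⊗ₜ[k] v - x ⊗ₜ[k] (b • v) ∈ R1)
    (a : ↥A) (w : W) (y : V ⊗[k] U) :
    (tbiPhi (k := k)).symm ((MulOpposite.op a • w) ⊗ₜ y)
      - (tbiPhi (k := k)).symm (w ⊗ₜ (tbiBodyVU A ((δ a) ⊗ₜ y))) ∈ R1 := by
  have hg2 : (LinearMap.mul' k H ∘ₗ LinearMap.rTensor H (antipode (R := k))) ∘ₗ
      Coalgebra.comul = Algebra.linearMap k H ∘ₗ Coalgebra.counit := by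
    rw [LinearMap.comp_assoc]; exact mul_antipode_rTensor_comul
  induction y using TensorProduct.induction_on with
  | zero =>
      simp only [tmul_zero, LinearMap.map_zero, LinearEquiv.map_zero, sub_self, sub_zero]
      exact Submodule.zero_mem _
  | tmul v u =>
      have h2 := tbi_claim2 A δ R1 hR (δ a) u w v
      rw [tbiChi_delta A δ hδ _ hg2 a] at h2
      have h3 := Submodule.neg_mem _ h2
      rw [neg_sub] at h3
      simpa only [tbiXi_tmul, one_smul, tbiPhi_symm_tmul] using h3
  | add y₁ y₂ ih₁ ih₂ =>
      have hmem := Submodule.add_mem _ ih₁ ih₂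
      rw [sub_add_sub_comm] at hmem
      simpa only [tmul_add, LinearMap.map_add, LinearEquiv.map_add] using hmem

end Claims


/-- Let `H` be a Hopf algebra over a field `k` with antipode `S` and `A` a
right coideal subalgebra of `H` (with coaction `δ : A → A ⊗ H` lifting `Δ`). For a left
`H`-module `U`, a left `A`-module `V` and a right `A`-module `W`, there is an isomorphism of
vector spaces `(U ⊗ W) ⊗_A V ≅ W ⊗_A (V ⊗ U)`, where `A` acts on `V ⊗ U` by
`a·(v ⊗ u) = Σ a₍₀₎v ⊗ a₍₁₎u` and on `U ⊗ W` by `(u ⊗ w)·a = Σ S(a₍₁₎)u ⊗ wa₍₀₎`. -/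
theorem tensor_balanced_iso
    (H U V W : Type*) [Ring H] [HopfAlgebra k H]
    (A : Subalgebra k H)
    (δ : ↥A →ₗ[k] ↥A ⊗[k] H)
    (hδ : ∀ a : ↥A, (TensorProduct.map A.val.toLinearMap LinearMap.id) (δ a) =
      Coalgebra.comul (R := k) (a : H))
    [AddCommGroup U] [Module k U] [Module H U] [IsScalarTower k H U] [SMulCommClass k H U]
    [AddCommGroup V] [Module k V] [Module ↥A V] [IsScalarTower k ↥A V] [SMulCommClass k ↥A V]
    [AddCommGroup W] [Module k W] [Module (↥A)ᵐᵒᵖ W] [IsScalarTower k (↥A)ᵐᵒᵖ W]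
    [SMulCommClass k (↥A)ᵐᵒᵖ W] :
    -- the left `A`-action on `V ⊗ U`:  `a · (v ⊗ u) = Σ a₍₀₎v ⊗ a₍₁₎u`
    letI actVU : ↥A → (V ⊗[k] U →ₗ[k] V ⊗[k] U) := fun a =>
      (TensorProduct.map (actionMap k ↥A V) (actionMap k H U) ∘ₗ
        (TensorProduct.tensorTensorTensorComm k ↥A H V U).toLinearMap) ∘ₗ
        (TensorProduct.mk k (↥A ⊗[k] H) (V ⊗[k] U) (δ a))
    -- the right `A`-action on `U ⊗ W`:  `(u ⊗ w) · a = Σ S(a₍₁₎)u ⊗ wa₍₀₎`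
    letI actUW : ↥A → (U ⊗[k] W →ₗ[k] U ⊗[k] W) := fun a =>
      (TensorProduct.map
          (actionMap k H U ∘ₗ LinearMap.rTensor U (antipode (R := k)))
          (actionMap k (↥A)ᵐᵒᵖ W ∘ₗ
            LinearMap.rTensor W (MulOpposite.opLinearEquiv k).toLinearMap) ∘ₗ
        (TensorProduct.tensorTensorTensorComm k H ↥A U W).toLinearMap ∘ₗ
          LinearMap.rTensor (U ⊗[k] W)
            ((TensorProduct.comm k ↥A H).toLinearMap)) ∘ₗ
        (TensorProduct.mk k (↥A ⊗[k] H) (U ⊗[k] W) (δ a))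
    -- the balanced tensor product relations
    letI relUWV : Submodule k ((U ⊗[k] W) ⊗[k] V) :=
      Submodule.span k {z | ∃ (x : U ⊗[k] W) (v : V) (a : ↥A),
        z = (actUW a x) ⊗ₜ[k] v - x ⊗ₜ[k] (a • v)}
    letI relWVU : Submodule k (W ⊗[k] (V ⊗[k] U)) :=
      Submodule.span k {z | ∃ (w : W) (y : V ⊗[k] U) (a : ↥A),
        z = (MulOpposite.op a • w) ⊗ₜ[k] y - w ⊗ₜ[k] (actVU a y)}
    Nonempty ((((U ⊗[k] W) ⊗[k] V) ⧸ relUWV) ≃ₗ[k] ((W ⊗[k] (V ⊗[k] U)) ⧸ relWVU)) := by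
  refine ⟨Submodule.Quotient.equiv _ _ (tbiPhi (k := k)) (le_antisymm ?_ ?_)⟩
  · rw [Submodule.map_le_iff_le_comap]
    refine Submodule.span_le.mpr ?_
    rintro z ⟨x, v, a, rfl⟩
    rw [SetLike.mem_coe, Submodule.mem_comap, map_sub]
    refine tbi_main1 A δ hδ _ (fun w y b => ?_) a x v
    exact Submodule.subset_span ⟨w, y, b, rfl⟩
  · refine Submodule.span_le.mpr ?_
    rintro z ⟨w, y, a, rfl⟩
    rw [SetLike.mem_coe]
    refine Submodule.mem_map.mpr
      ⟨(tbiPhi (k := k)).symm _, ?_, (tbiPhi (k := k)).apply_symm_apply _⟩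
    rw [map_sub]
    refine tbi_main2 A δ hδ _ (fun x v b => ?_) a w y
    exact Submodule.subset_span ⟨x, v, b, rfl⟩
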